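/- Let p ≥ 2 and let Υ_p := { (x, y) ∈ ℝ² : x > 0, |y| < x^p } be a planar domain with an outward-pointing cusp at the origin. Then for every N > 0 there exist a constant C > 0 and γ₀ > 0 such that for every γ ≥ γ₀ there is a function v admissible for Υ_p with J(v; γ, Υ_p) ≤ −C γ^N. In particular, Λ(Υ_p; γ) ≤ −C γ^N for all γ ≥ γ₀. -/

import Mathlib

open MeasureTheory Real Filter Topology

noncomputable section

/-- A function is admissible for the Robin Rayleigh quotient on `Ω ⊆ ℝ^m`:
continuous on the closure, continuously differentiable on `Ω`, with
`0 < ∫_Ω v² < ∞`, `∫_Ω ‖∇v‖² < ∞` and `∫_{∂Ω} v² dH^{m-1} < ∞`. -/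
def Admissible {m : ℕ} (Ω : Set (EuclideanSpace ℝ (Fin m)))
    (v : EuclideanSpace ℝ (Fin m) → ℝ) : Prop :=
  ContinuousOn v (closure Ω) ∧
  (∀ x ∈ Ω, DifferentiableAt ℝ v x) ∧
  ContinuousOn (fun x => gradient v x) Ω ∧
  IntegrableOn (fun x => (v x) ^ 2) Ω volume ∧
  0 < ∫ x in Ω, (v x) ^ 2 ∧
  IntegrableOn (fun x => ‖gradient v x‖ ^ 2) Ω volume ∧
  IntegrableOn (fun x => (v x) ^ 2) (frontier Ω) μH[(m : ℝ) - 1]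

/-- The Robin Rayleigh quotient
`J(v; γ, Ω) = (∫_Ω ‖∇v‖² - γ ∫_{∂Ω} v² dH^{m-1}) / ∫_Ω v²`. -/
def RQ {m : ℕ} (Ω : Set (EuclideanSpace ℝ (Fin m))) (γ : ℝ)
    (v : EuclideanSpace ℝ (Fin m) → ℝ) : ℝ :=
  ((∫ x in Ω, ‖gradient v x‖ ^ 2) - γ * ∫ x in frontier Ω, (v x) ^ 2 ∂μH[(m : ℝ) - 1]) /
    ∫ x in Ω, (v x) ^ 2

/-- The principal Robin eigenvalue `Λ(Ω; γ)`, as an extended real: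
the infimum of the Rayleigh quotient over admissible functions. -/
def principalEV {m : ℕ} (Ω : Set (EuclideanSpace ℝ (Fin m))) (γ : ℝ) : EReal :=
  sInf {x : EReal | ∃ v, Admissible Ω v ∧ x = (RQ Ω γ v : EReal)}

/-- The planar cusp domain `Υ_p = {(x, y) : x > 0, |y| < x^p}`. -/
def cuspDomain (p : ℝ) : Set (EuclideanSpace ℝ (Fin 2)) :=
  {x | 0 < x 0 ∧ |x 1| < (x 0) ^ p}

/-!
Take a test function of `x` alone: a fixed bump rescaled to the window `ε/2 ≤ x ≤ ε`.
Above that window the cusp has area `≍ ε^(p+1)`, while its boundary there has length `≍ ε`.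
So the Dirichlet energy is `O(ε⁻² · ε^(p+1)) = O(ε)` because `p ≥ 2`, the boundary term
is `≳ γ ε`, and the `L²` norm is `O(ε^(p+1))`. Once `γ` dominates the energy, the Rayleigh
quotient is `≲ -γ ε^(-p)`, and `ε = γ^(-N)` makes this `≲ -γ^(1 + N p) ≤ -γ^N`.
-/

open Set Function

section SetIntegral

variable {α : Type*} [MeasurableSpace α] {μ : Measure α} {f : α → ℝ} {s t : Set α} {C : ℝ}

lemma integrableOn_of_abs_le_of_support_subset (hf : AEStronglyMeasurable f μ)
    (ht : MeasurableSet t) (hst : μ (s ∩ t) ≠ ⊤) (hfC : ∀ x, |f x| ≤ C) (hft : support f ⊆ t) :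
    IntegrableOn f s μ := by
  rw [← indicator_eq_self.2 hft, IntegrableOn, integrable_indicator_iff ht, IntegrableOn,
    Measure.restrict_restrict ht, inter_comm]
  exact Measure.integrableOn_of_bounded hst hf (M := C) (ae_of_all _ hfC)

lemma setIntegral_le_of_abs_le_of_support_subset (ht : MeasurableSet t) (hst : μ (s ∩ t) ≠ ⊤)
    (hfC : ∀ x, |f x| ≤ C) (hft : support f ⊆ t) :
    ∫ x in s, f x ∂μ ≤ C * μ.real (s ∩ t) := by
  rw [← indicator_eq_self.2 hft, setIntegral_indicator ht]
  exact (le_abs_self _).trans <| norm_setIntegral_le_of_norm_le_const hst.lt_top fun x _ =>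
    (Real.norm_eq_abs (f x)).trans_le (hfC x)

lemma measureReal_inter_le_setIntegral (hs : MeasurableSet s) (ht : MeasurableSet t)
    (hst : μ (s ∩ t) ≠ ⊤) (hf : IntegrableOn f s μ) (hf0 : ∀ x ∈ s, 0 ≤ f x)
    (hf1 : ∀ x ∈ s ∩ t, 1 ≤ f x) :
    μ.real (s ∩ t) ≤ ∫ x in s, f x ∂μ :=
  calc μ.real (s ∩ t) = 1 * μ.real (s ∩ t) := (one_mul _).symm
    _ ≤ ∫ x in s ∩ t, f x ∂μ :=
      setIntegral_ge_of_const_le_real (hs.inter ht) hst hf1 (hf.mono_set inter_subset_left)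
    _ ≤ ∫ x in s, f x ∂μ :=
      setIntegral_mono_set hf (ae_restrict_of_forall_mem hs hf0) inter_subset_left.eventuallyLE

end SetIntegral

section Coordinate

variable {ι : Type*}

def slab (i : ι) (s t : ℝ) : Set (EuclideanSpace ℝ ι) := {z | z i ∈ Icc s t}

lemma isClosed_slab (i : ι) (s t : ℝ) : IsClosed (slab i s t) :=
  isClosed_Icc.preimage (PiLp.continuous_apply 2 _ i)

variable {Ω : Set (EuclideanSpace ℝ ι)} {i : ι} {g : ℝ → ℝ} {s t L : ℝ}

lemma support_sq_comp_apply_subset (hsupp : support g ⊆ Icc s t) :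
    support (fun z : EuclideanSpace ℝ ι => g (z i) ^ 2) ⊆ slab i s t := fun z hz =>
  hsupp (by simpa using hz)

variable [Fintype ι]

lemma measureReal_inter_slab_le_setIntegral_sq {μ : Measure (EuclideanSpace ℝ ι)}
    {S : Set (EuclideanSpace ℝ ι)} (hS : MeasurableSet S) (hone : ∀ x ∈ Icc s t, g x = 1)
    (hfin : μ (S ∩ slab i s t) ≠ ⊤) (hint : IntegrableOn (fun z => g (z i) ^ 2) S μ) :
    μ.real (S ∩ slab i s t) ≤ ∫ z in S, g (z i) ^ 2 ∂μ :=
  measureReal_inter_le_setIntegral hS (isClosed_slab i s t).measurableSet hfin hint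
    (fun _ _ => sq_nonneg _) fun z hz => by rw [hone _ hz.2, one_pow]

lemma integrableOn_sq_comp_apply {μ : Measure (EuclideanSpace ℝ ι)}
    {S : Set (EuclideanSpace ℝ ι)} (hg : Continuous g) (hsupp : support g ⊆ Icc s t)
    (hfin : μ (S ∩ slab i s t) ≠ ⊤) : IntegrableOn (fun z => g (z i) ^ 2) S μ := by
  obtain ⟨C, hC⟩ := hg.bounded_above_of_compact_support
    (.of_support_subset_isCompact isCompact_Icc hsupp)
  refine integrableOn_of_abs_le_of_support_subset
    ((hg.comp (PiLp.continuous_apply 2 _ i)).pow 2).aestronglyMeasurable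
    (isClosed_slab i s t).measurableSet hfin (C := C ^ 2) (fun z => ?_)
    (support_sq_comp_apply_subset hsupp)
  simpa [abs_pow] using pow_le_pow_left₀ (norm_nonneg _) (hC (z i)) 2

lemma setIntegral_sq_comp_apply_le (hsupp : support g ⊆ Icc s t) (hg1 : ∀ x, |g x| ≤ 1)
    (hvol : volume (Ω ∩ slab i s t) ≠ ⊤) :
    ∫ z in Ω, g (z i) ^ 2 ≤ volume.real (Ω ∩ slab i s t) := by
  refine (setIntegral_le_of_abs_le_of_support_subset (isClosed_slab i s t).measurableSet hvol
    (fun z => ?_) (support_sq_comp_apply_subset hsupp)).trans_eq (one_mul _)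
  rw [abs_pow]
  exact pow_le_one₀ (abs_nonneg _) (hg1 (z i))

variable [DecidableEq ι]

lemma HasDerivAt.hasGradientAt_comp_apply {g' : ℝ} {z : EuclideanSpace ℝ ι}
    (hg : HasDerivAt g g' (z i)) :
    HasGradientAt (fun z : EuclideanSpace ℝ ι => g (z i)) (EuclideanSpace.single i g') z := by
  rw [hasGradientAt_iff_hasFDerivAt]
  have hdual : InnerProductSpace.toDual ℝ _ (EuclideanSpace.single i g') =
      g' • EuclideanSpace.proj (𝕜 := ℝ) i := by
    ext w
    simp [EuclideanSpace.inner_single_left]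
  rw [hdual]
  exact hg.comp_hasFDerivAt z (EuclideanSpace.proj (𝕜 := ℝ) i).hasFDerivAt

lemma gradient_comp_apply (hg : Differentiable ℝ g) :
    gradient (fun z : EuclideanSpace ℝ ι => g (z i)) =
      fun z => EuclideanSpace.single i (deriv g (z i)) :=
  funext fun z => ((hg (z i)).hasDerivAt.hasGradientAt_comp_apply).gradient

lemma EuclideanSpace.continuous_single (i : ι) :
    Continuous (EuclideanSpace.single i : ℝ → EuclideanSpace ℝ ι) :=
  (Isometry.of_dist_eq (PiLp.dist_single_same 2 (fun _ : ι => ℝ) i)).continuous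

lemma norm_gradient_comp_apply (hg : Differentiable ℝ g) (z : EuclideanSpace ℝ ι) :
    ‖gradient (fun z : EuclideanSpace ℝ ι => g (z i)) z‖ = |deriv g (z i)| := by
  simp [gradient_comp_apply hg]

lemma support_norm_gradient_sq_comp_apply_subset (hg : Differentiable ℝ g)
    (hsupp : support g ⊆ Icc s t) :
    support (fun z => ‖gradient (fun z : EuclideanSpace ℝ ι => g (z i)) z‖ ^ 2) ⊆
      slab i s t := fun z hz =>
  closure_minimal hsupp isClosed_Icc
    (support_deriv_subset (by simpa [norm_gradient_comp_apply hg] using hz))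

lemma continuous_gradient_comp_apply (hg : ContDiff ℝ 1 g) :
    Continuous (gradient (fun z : EuclideanSpace ℝ ι => g (z i))) := by
  rw [gradient_comp_apply (hg.differentiable one_ne_zero)]
  exact (EuclideanSpace.continuous_single i).comp
    ((hg.continuous_deriv le_rfl).comp (PiLp.continuous_apply 2 _ i))

lemma setIntegral_norm_gradient_sq_comp_apply_le (hg : Differentiable ℝ g)
    (hsupp : support g ⊆ Icc s t) (hg' : ∀ x, |deriv g x| ≤ L)
    (hvol : volume (Ω ∩ slab i s t) ≠ ⊤) :
    ∫ z in Ω, ‖gradient (fun z : EuclideanSpace ℝ ι => g (z i)) z‖ ^ 2 ≤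
      L ^ 2 * volume.real (Ω ∩ slab i s t) :=
  setIntegral_le_of_abs_le_of_support_subset (isClosed_slab i s t).measurableSet hvol
    (fun z => by
      simpa [abs_pow, norm_gradient_comp_apply hg] using
        pow_le_pow_left₀ (abs_nonneg _) (hg' (z i)) 2)
    (support_norm_gradient_sq_comp_apply_subset hg hsupp)

end Coordinate

section RayleighQuotient

variable {m : ℕ} {Ω : Set (EuclideanSpace ℝ (Fin m))} {v : EuclideanSpace ℝ (Fin m) → ℝ}
  {γ b D : ℝ}

theorem admissible_comp_apply {i : Fin m} {g : ℝ → ℝ} {s t : ℝ} (hg : ContDiff ℝ 1 g)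
    (hsupp : support g ⊆ Icc s t)
    (hvol : volume (Ω ∩ slab i s t) ≠ ⊤)
    (hbdry : μH[(m : ℝ) - 1] (frontier Ω ∩ slab i s t) ≠ ⊤)
    (hpos : 0 < ∫ z in Ω, g (z i) ^ 2) :
    Admissible Ω (fun z => g (z i)) := by
  have hdiff : Differentiable ℝ g := hg.differentiable one_ne_zero
  have hcompact : HasCompactSupport (deriv g) :=
    (HasCompactSupport.of_support_subset_isCompact isCompact_Icc hsupp).deriv
  obtain ⟨C, hC⟩ := (hg.continuous_deriv le_rfl).bounded_above_of_compact_support hcompact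
  refine ⟨(hg.continuous.comp (PiLp.continuous_apply 2 _ i)).continuousOn, fun z _ =>
    (hdiff (z i)).hasDerivAt.hasGradientAt_comp_apply.differentiableAt,
    (continuous_gradient_comp_apply hg).continuousOn,
    integrableOn_sq_comp_apply hg.continuous hsupp hvol, hpos,
    integrableOn_of_abs_le_of_support_subset
      ((continuous_gradient_comp_apply hg).norm.pow 2).aestronglyMeasurable
      (isClosed_slab i s t).measurableSet hvol (C := C ^ 2) (fun z => ?_)
      (support_norm_gradient_sq_comp_apply_subset hdiff hsupp),
    integrableOn_sq_comp_apply hg.continuous hsupp hbdry⟩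
  simpa [abs_pow, norm_gradient_comp_apply hdiff] using
    pow_le_pow_left₀ (norm_nonneg _) (hC (z i)) 2

lemma principalEV_le_RQ (hv : Admissible Ω v) : principalEV Ω γ ≤ RQ Ω γ v :=
  sInf_le ⟨v, hv, rfl⟩

lemma RQ_le_of_le_half_boundary (hγ : 0 ≤ γ) (hb : 0 ≤ b)
    (hgrad : ∫ x in Ω, ‖gradient v x‖ ^ 2 ≤ γ * b / 2)
    (hbdry : b ≤ ∫ x in frontier Ω, v x ^ 2 ∂μH[(m : ℝ) - 1])
    (hpos : 0 < ∫ x in Ω, v x ^ 2) (hD : ∫ x in Ω, v x ^ 2 ≤ D) :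
    RQ Ω γ v ≤ -(γ * b) / (2 * D) :=
  calc RQ Ω γ v ≤ -(γ * b / 2) / ∫ x in Ω, v x ^ 2 :=
        div_le_div_of_nonneg_right (by nlinarith [mul_le_mul_of_nonneg_left hbdry hγ]) hpos.le
    _ ≤ -(γ * b / 2) / D := by
        rw [neg_div, neg_div, neg_le_neg_iff]
        exact div_le_div_of_nonneg_left (by positivity) hpos hD
    _ = -(γ * b) / (2 * D) := by ring

end RayleighQuotient

lemma EuclideanSpace.volume_preimage_ofLp_Icc {ι : Type*} [Fintype ι] (a b : ι → ℝ) :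
    volume (WithLp.ofLp ⁻¹' Icc a b : Set (EuclideanSpace ℝ ι)) =
      ∏ i, ENNReal.ofReal (b i - a i) := by
  rw [(PiLp.volume_preserving_ofLp ι).measure_preimage measurableSet_Icc.nullMeasurableSet,
    Real.volume_Icc_pi]

lemma ContDiffOn.hausdorffMeasure_image_Icc_lt_top {E : Type*} [NormedAddCommGroup E]
    [NormedSpace ℝ E] [MeasurableSpace E] [BorelSpace E] {f : ℝ → E} {s t : ℝ}
    (hf : ContDiffOn ℝ 1 f (Icc s t)) :
    μH[1] (f '' Icc s t) < ⊤ := by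
  obtain ⟨K, hK⟩ := hf.exists_lipschitzOnWith one_ne_zero (convex_Icc s t) isCompact_Icc
  refine (hK.hausdorffMeasure_image_le zero_le_one).trans_lt ?_
  rw [hausdorffMeasure_real, Real.volume_Icc, ENNReal.rpow_one]
  exact ENNReal.mul_lt_top ENNReal.coe_lt_top ENNReal.ofReal_lt_top

lemma contDiffOn_toLp_pair {f g : ℝ → ℝ} {S : Set ℝ} (hf : ContDiffOn ℝ 1 f S)
    (hg : ContDiffOn ℝ 1 g S) : ContDiffOn ℝ 1 (fun x => !₂[f x, g x]) S := by
  rw [contDiffOn_piLp]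
  intro i
  fin_cases i
  · simpa using hf
  · simpa using hg

local notation "ℝ²" => EuclideanSpace ℝ (Fin 2)

section Cusp

variable {p s t : ℝ}

lemma isOpen_cuspDomain (p : ℝ) : IsOpen (cuspDomain p) := by
  have hc : ContinuousOn (fun z : ℝ² => z 0 ^ p - |z 1|) {z | 0 < z 0} :=
    ((PiLp.continuous_apply 2 _ 0).continuousOn.rpow_const fun _ hz => Or.inl (ne_of_gt hz)).sub
      (PiLp.continuous_apply 2 _ 1).abs.continuousOn
  simpa [cuspDomain, preimage, ofPred_and] using
    hc.isOpen_inter_preimage (isOpen_lt continuous_const (by fun_prop)) (isOpen_Ioi (a := 0))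

lemma mem_frontier_cuspDomain_iff {z : ℝ²} (hz : 0 < z 0) :
    z ∈ frontier (cuspDomain p) ↔ |z 1| = z 0 ^ p := by
  rw [(isOpen_cuspDomain p).frontier_eq, Set.mem_sdiff]
  constructor
  · rintro ⟨hcl, hnot⟩
    refine le_antisymm ?_ (not_lt.1 fun h => hnot ⟨hz, h⟩)
    have hf : ContinuousAt (fun w : ℝ² => w 0 ^ p - |w 1|) z :=
      ((by fun_prop : Continuous fun w : ℝ² => w 0).continuousAt.rpow_const
        (Or.inl hz.ne')).sub (by fun_prop : Continuous fun w : ℝ² => |w 1|).continuousAt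
    have := mem_closure_iff_nhdsWithin_neBot.1 hcl
    have := ge_of_tendsto (hf.tendsto.mono_left nhdsWithin_le_nhds)
      (eventually_nhdsWithin_of_forall fun w (hw : w ∈ cuspDomain p) => (sub_pos.2 hw.2).le)
    linarith
  · intro h
    refine ⟨?_, fun hΩ => hΩ.2.ne h⟩
    let w : ℝ → ℝ² := fun c => z + (c - 1) • EuclideanSpace.single 1 (z 1)
    have hw : Tendsto w (𝓝[<] 1) (𝓝 z) := by
      have : Continuous w := by fun_prop
      simpa [w] using (this.tendsto 1).mono_left nhdsWithin_le_nhds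
    refine mem_closure_of_tendsto hw ?_
    filter_upwards [Ioo_mem_nhdsLT (show (0:ℝ) < 1 by norm_num)] with c hc
    have hzp : 0 < z 0 ^ p := rpow_pos_of_pos hz p
    refine ⟨by simpa [w] using hz, ?_⟩
    have : |z 1 + (c - 1) * z 1| = c * z 0 ^ p := by
      rw [← h, show z 1 + (c - 1) * z 1 = c * z 1 by ring, abs_mul, abs_of_pos hc.1]
    simpa [w, this] using mul_lt_of_lt_one_left hzp hc.2

lemma cuspDomain_inter_slab_subset (hp : 0 ≤ p) (hs : 0 ≤ s) :
    cuspDomain p ∩ slab 0 s t ⊆ WithLp.ofLp ⁻¹' Icc ![s, -t ^ p] ![t, t ^ p] := by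
  rintro z ⟨⟨-, hz1⟩, hz0⟩
  have := (hz1.trans_le (rpow_le_rpow (hs.trans hz0.1) hz0.2 hp)).le
  simp only [mem_preimage, mem_Icc, Pi.le_def, Fin.forall_fin_two]
  simp only [slab, mem_ofPred_eq, mem_Icc] at hz0
  exact ⟨⟨by simpa using hz0.1, by simpa using (abs_le.1 this).1⟩,
    ⟨by simpa using hz0.2, by simpa using (abs_le.1 this).2⟩⟩

lemma volume_cuspDomain_inter_slab_le (hp : 0 ≤ p) (hs : 0 ≤ s) (hst : s ≤ t) :
    volume (cuspDomain p ∩ slab 0 s t) ≤ ENNReal.ofReal ((t - s) * (2 * t ^ p)) := by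
  refine (measure_mono (cuspDomain_inter_slab_subset hp hs)).trans_eq ?_
  rw [EuclideanSpace.volume_preimage_ofLp_Icc, Fin.prod_univ_two,
    ← ENNReal.ofReal_mul (by simpa using hst)]
  norm_num [two_mul]

lemma volume_cuspDomain_inter_slab_ne_top (hp : 0 ≤ p) (hs : 0 ≤ s) (hst : s ≤ t) :
    volume (cuspDomain p ∩ slab 0 s t) ≠ ⊤ :=
  ((volume_cuspDomain_inter_slab_le hp hs hst).trans_lt ENNReal.ofReal_lt_top).ne

lemma volume_cuspDomain_inter_slab_pos (hs : 0 < s) (hst : s < t) :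
    0 < volume (cuspDomain p ∩ slab 0 s t) := by
  have hU : IsOpen (cuspDomain p ∩ {z : ℝ² | z 0 ∈ Ioo s t}) :=
    (isOpen_cuspDomain p).inter (isOpen_Ioo.preimage (by fun_prop))
  have hc : 0 < (s + t) / 2 := by linarith
  have hne : (cuspDomain p ∩ {z : ℝ² | z 0 ∈ Ioo s t}).Nonempty :=
    ⟨!₂[(s + t) / 2, 0], ⟨by simpa using hc, by simpa using rpow_pos_of_pos hc p⟩,
      by constructor <;> simp <;> linarith⟩
  exact (hU.measure_pos volume hne).trans_le
    (measure_mono (inter_subset_inter_right _ fun z hz => Ioo_subset_Icc_self hz))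

lemma frontier_cuspDomain_inter_slab_subset (hs : 0 < s) :
    frontier (cuspDomain p) ∩ slab 0 s t ⊆
      (fun x => !₂[x, x ^ p]) '' Icc s t ∪ (fun x => !₂[x, -x ^ p]) '' Icc s t := by
  rintro z ⟨hzF, hz : z 0 ∈ Icc s t⟩
  have hz_eq : !₂[z 0, z 1] = z := by ext i; fin_cases i <;> rfl
  rcases (abs_eq (rpow_nonneg (hs.le.trans hz.1) p)).1
    ((mem_frontier_cuspDomain_iff (hs.trans_le hz.1)).1 hzF) with h | h
  · exact Or.inl ⟨z 0, hz, by simp only; rw [← h, hz_eq]⟩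
  · exact Or.inr ⟨z 0, hz, by simp only; rw [← h, hz_eq]⟩

lemma hausdorffMeasure_frontier_cuspDomain_inter_slab_lt_top (hs : 0 < s) :
    μH[1] (frontier (cuspDomain p) ∩ slab 0 s t) < ⊤ := by
  have hpow : ContDiffOn ℝ 1 (fun x : ℝ => x ^ p) (Icc s t) := fun x hx =>
    (contDiffAt_rpow_const_of_ne (hs.trans_le hx.1).ne').contDiffWithinAt
  refine (measure_mono (frontier_cuspDomain_inter_slab_subset hs)).trans_lt
    ((measure_union_le _ _).trans_lt (ENNReal.add_lt_top.2 ⟨?_, ?_⟩))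
  · exact (contDiffOn_toLp_pair contDiffOn_id hpow).hausdorffMeasure_image_Icc_lt_top
  · exact (contDiffOn_toLp_pair contDiffOn_id hpow.neg).hausdorffMeasure_image_Icc_lt_top

lemma ofReal_le_hausdorffMeasure_frontier_cuspDomain_inter_slab (hs : 0 < s) :
    ENNReal.ofReal (t - s) ≤ μH[1] (frontier (cuspDomain p) ∩ slab 0 s t) := by
  have hproj : LipschitzWith 1 fun z : ℝ² => z 0 :=
    LipschitzWith.of_edist_le fun z w => PiLp.edist_apply_le z w 0
  have hsub : Icc s t ⊆ (fun z : ℝ² => z 0) '' (frontier (cuspDomain p) ∩ slab 0 s t) :=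
    fun x hx => by
      have hx0 : 0 < x := hs.trans_le hx.1
      refine ⟨!₂[x, x ^ p], ⟨(mem_frontier_cuspDomain_iff (by simpa using hx0)).2 ?_,
        by simpa [slab] using hx⟩, by simp⟩
      simp [abs_of_nonneg (rpow_nonneg hx0.le p)]
  calc ENNReal.ofReal (t - s) = μH[1] (Icc s t) := by
        rw [hausdorffMeasure_real, Real.volume_Icc]
    _ ≤ μH[1] ((fun z : ℝ² => z 0) '' (frontier (cuspDomain p) ∩ slab 0 s t)) :=
        measure_mono hsub
    _ ≤ μH[1] (frontier (cuspDomain p) ∩ slab 0 s t) := by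
        simpa using hproj.hausdorffMeasure_image_le zero_le_one _

end Cusp

def cuspBump : ContDiffBump (3 / 4 : ℝ) := ⟨1 / 8, 1 / 4, by norm_num, by norm_num⟩

def cuspProfile (ε x : ℝ) : ℝ := cuspBump (ε⁻¹ * x)

section CuspProfile

variable {ε M : ℝ}

lemma contDiff_cuspProfile (ε : ℝ) : ContDiff ℝ 1 (cuspProfile ε) :=
  cuspBump.contDiff.comp (contDiff_const.mul contDiff_id)

lemma support_cuspProfile_subset (hε : 0 < ε) : support (cuspProfile ε) ⊆ Icc (ε / 2) ε := by
  intro x hx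
  have hball : ε⁻¹ * x ∈ Metric.ball (3 / 4 : ℝ) (1 / 4) := cuspBump.support_eq ▸ hx
  rw [Real.ball_eq_Ioo] at hball
  have h1 : (1 / 2 : ℝ) < ε⁻¹ * x := by linarith [hball.1]
  have h2 : ε⁻¹ * x < 1 := by linarith [hball.2]
  rw [lt_inv_mul_iff₀ hε] at h1
  rw [inv_mul_lt_iff₀ hε] at h2
  constructor <;> linarith

lemma cuspProfile_eq_one (hε : 0 < ε) {x : ℝ} (hx : x ∈ Icc (5 / 8 * ε) (7 / 8 * ε)) :
    cuspProfile ε x = 1 := by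
  refine cuspBump.one_of_mem_closedBall ?_
  rw [Real.closedBall_eq_Icc]
  have h1 : 5 / 8 ≤ ε⁻¹ * x := (le_inv_mul_iff₀ hε).2 (by linarith [hx.1])
  have h2 : ε⁻¹ * x ≤ 7 / 8 := (inv_mul_le_iff₀ hε).2 (by linarith [hx.2])
  change ε⁻¹ * x ∈ Icc (3 / 4 - 1 / 8) (3 / 4 + 1 / 8)
  constructor <;> linarith

lemma abs_cuspProfile_le_one (ε x : ℝ) : |cuspProfile ε x| ≤ 1 :=
  abs_le.2 ⟨(neg_nonpos.2 zero_le_one).trans cuspBump.nonneg, cuspBump.le_one⟩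

lemma exists_abs_deriv_cuspBump_le : ∃ M, ∀ x, |deriv cuspBump x| ≤ M :=
  ((cuspBump.contDiff (n := 1)).continuous_deriv le_rfl).bounded_above_of_compact_support
    cuspBump.hasCompactSupport.deriv

lemma abs_deriv_cuspProfile_le (hε : 0 < ε) (hM : ∀ x, |deriv cuspBump x| ≤ M) (x : ℝ) :
    |deriv (cuspProfile ε) x| ≤ ε⁻¹ * M := by
  change |deriv (fun x => cuspBump (ε⁻¹ * x)) x| ≤ ε⁻¹ * M
  rw [deriv_comp_mul_left, smul_eq_mul, abs_mul, abs_of_pos (inv_pos.2 hε)]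
  exact mul_le_mul_of_nonneg_left (hM _) (inv_pos.2 hε).le

end CuspProfile

section CuspTestFunction

variable {p ε γ M : ℝ}

lemma setIntegral_sq_cuspProfile_pos (hp : 0 ≤ p) (hε : 0 < ε) :
    0 < ∫ z in cuspDomain p, cuspProfile ε (z 0) ^ 2 := by
  have hfin := volume_cuspDomain_inter_slab_ne_top hp (s := 5 / 8 * ε) (t := 7 / 8 * ε)
    (by positivity) (by linarith)
  refine (ENNReal.toReal_pos
    (volume_cuspDomain_inter_slab_pos (by positivity) (by linarith)).ne' hfin).trans_le ?_
  exact measureReal_inter_slab_le_setIntegral_sq (isOpen_cuspDomain p).measurableSet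
    (fun _ => cuspProfile_eq_one hε) hfin
    (integrableOn_sq_comp_apply (contDiff_cuspProfile ε).continuous
      (support_cuspProfile_subset hε) (volume_cuspDomain_inter_slab_ne_top hp (by positivity)
        (by linarith)))

theorem admissible_cuspProfile (hp : 0 ≤ p) (hε : 0 < ε) :
    Admissible (cuspDomain p) (fun z => cuspProfile ε (z 0)) := by
  refine admissible_comp_apply (contDiff_cuspProfile ε) (support_cuspProfile_subset hε)
    (volume_cuspDomain_inter_slab_ne_top hp (by positivity) (by linarith)) ?_
    (setIntegral_sq_cuspProfile_pos hp hε)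
  rw [show ((2 : ℕ) : ℝ) - 1 = 1 by norm_num]
  exact (hausdorffMeasure_frontier_cuspDomain_inter_slab_lt_top (by positivity)).ne

lemma le_setIntegral_frontier_sq_cuspProfile (hε : 0 < ε) :
    ε / 4 ≤ ∫ z in frontier (cuspDomain p), cuspProfile ε (z 0) ^ 2 ∂μH[((2 : ℕ) : ℝ) - 1] := by
  rw [show ((2 : ℕ) : ℝ) - 1 = 1 by norm_num]
  have hfin := hausdorffMeasure_frontier_cuspDomain_inter_slab_lt_top (p := p)
    (s := 5 / 8 * ε) (t := 7 / 8 * ε) (by positivity)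
  calc ε / 4 = 7 / 8 * ε - 5 / 8 * ε := by ring
    _ ≤ μH[1].real (frontier (cuspDomain p) ∩ slab 0 (5 / 8 * ε) (7 / 8 * ε)) :=
      (ENNReal.ofReal_le_iff_le_toReal hfin.ne).1
        (ofReal_le_hausdorffMeasure_frontier_cuspDomain_inter_slab (by positivity))
    _ ≤ _ := measureReal_inter_slab_le_setIntegral_sq isClosed_frontier.measurableSet
      (fun _ => cuspProfile_eq_one hε) hfin.ne
      (integrableOn_sq_comp_apply (contDiff_cuspProfile ε).continuous
        (support_cuspProfile_subset hε)
        (hausdorffMeasure_frontier_cuspDomain_inter_slab_lt_top (by positivity)).ne)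

theorem RQ_cuspProfile_le (hp : 2 ≤ p) (hε : 0 < ε) (hε1 : ε ≤ 1)
    (hM : ∀ x, |deriv cuspBump x| ≤ M) (hγ : 8 * M ^ 2 ≤ γ) :
    RQ (cuspDomain p) γ (fun z => cuspProfile ε (z 0)) ≤ -γ / (8 * ε ^ p) := by
  have hp0 : 0 ≤ p := by linarith
  have hfin := volume_cuspDomain_inter_slab_ne_top hp0 (by positivity : 0 ≤ ε / 2)
    (by linarith : ε / 2 ≤ ε)
  have hvol : volume.real (cuspDomain p ∩ slab 0 (ε / 2) ε) ≤ ε ^ p * ε :=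
    (ENNReal.toReal_le_of_le_ofReal (by nlinarith [rpow_pos_of_pos hε p])
      (volume_cuspDomain_inter_slab_le hp0 (by positivity) (by linarith))).trans_eq (by ring)
  have hεp : ε ^ p ≤ ε * ε := by
    simpa [← sq] using rpow_le_rpow_of_exponent_ge hε hε1 hp
  have hgrad : ∫ z in cuspDomain p, ‖gradient (fun z => cuspProfile ε (z 0)) z‖ ^ 2 ≤
      γ * (ε / 4) / 2 :=
    calc _ ≤ (ε⁻¹ * M) ^ 2 * volume.real (cuspDomain p ∩ slab 0 (ε / 2) ε) :=
          setIntegral_norm_gradient_sq_comp_apply_le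
            ((contDiff_cuspProfile ε).differentiable one_ne_zero) (support_cuspProfile_subset hε)
            (abs_deriv_cuspProfile_le hε hM) hfin
      _ ≤ (ε⁻¹ * M) ^ 2 * (ε * ε * ε) := by gcongr; nlinarith
      _ = M ^ 2 * ε := by field_simp
      _ ≤ γ * (ε / 4) / 2 := by nlinarith
  calc RQ (cuspDomain p) γ (fun z => cuspProfile ε (z 0))
        ≤ -(γ * (ε / 4)) / (2 * (ε ^ p * ε)) :=
        RQ_le_of_le_half_boundary (by nlinarith [sq_nonneg M]) (by positivity) hgrad
          (le_setIntegral_frontier_sq_cuspProfile hε) (setIntegral_sq_cuspProfile_pos hp0 hε)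
          ((setIntegral_sq_comp_apply_le (support_cuspProfile_subset hε)
            (abs_cuspProfile_le_one ε) hfin).trans hvol)
    _ = -γ / (8 * ε ^ p) := by field_simp; ring

end CuspTestFunction

/-- For the cusp domain `Υ_p` with `p ≥ 2`, for every `N > 0` there are `C > 0` and
`γ₀ > 0` such that for `γ ≥ γ₀` some admissible test function has Rayleigh quotient
`≤ -C γ^N`; in particular `Λ(Υ_p;γ) ≤ -C γ^N`. -/
theorem stmt17 (p : ℝ) (hp : 2 ≤ p) :
    ∀ N : ℝ, 0 < N →
      ∃ C : ℝ, 0 < C ∧ ∃ γ₀ : ℝ, 0 < γ₀ ∧ ∀ γ : ℝ, γ₀ ≤ γ →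
        (∃ v, Admissible (cuspDomain p) v ∧
          RQ (cuspDomain p) γ v ≤ -C * γ ^ N) ∧
        principalEV (cuspDomain p) γ ≤ ((-C * γ ^ N : ℝ) : EReal) := by
  intro N hN
  obtain ⟨M, hM⟩ := exists_abs_deriv_cuspBump_le
  refine ⟨1 / 8, by norm_num, 8 * M ^ 2 + 1, by positivity, fun γ hγ => ?_⟩
  have hγ1 : 1 ≤ γ := by nlinarith [sq_nonneg M]
  have hγ0 : 0 < γ := by linarith
  set ε := γ ^ (-N)
  have hε : 0 < ε := rpow_pos_of_pos hγ0 _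
  have hadm := admissible_cuspProfile (p := p) (by linarith) hε
  have hscale : -γ / (8 * ε ^ p) ≤ -(1 / 8) * γ ^ N := by
    have : γ / ε ^ p = γ ^ (1 + N * p) := by
      rw [← rpow_mul hγ0.le, neg_mul, rpow_neg hγ0.le, div_inv_eq_mul, rpow_add hγ0, rpow_one]
    have hle : γ ^ N ≤ γ ^ (1 + N * p) := rpow_le_rpow_of_exponent_le hγ1 (by nlinarith)
    rw [neg_div, mul_comm 8, ← div_div, this]
    linarith
  have hRQ := (RQ_cuspProfile_le hp hε (rpow_le_one_of_one_le_of_nonpos hγ1 (by linarith)) hM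
    (by linarith)).trans hscale
  exact ⟨⟨_, hadm, hRQ⟩, (principalEV_le_RQ hadm).trans (EReal.coe_le_coe_iff.2 hRQ)⟩

end
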